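/- arXiv:1811.02264 — 2 statements merged into one kernel-verified Lean document; each statement's English description precedes it below -/
import Mathlib

section
/- (Shapirovskii's Lemma) Let 𝒰 be an open cover of a topological space X. Then there exist a discrete subset D of X and a subcollection 𝒱 ⊆ 𝒰 such that |𝒱| = |D| and X = cl(D) ∪ ⋃𝒱. -/
open Cardinal Set

universe u

/-!
Fix a well-order `≺` on `X` and, for every point `x`, a member `u x ∈ 𝒰` containing `x`.
Walking along `≺`, put `x` into `D` exactly when it is neither in the closure of the earlier
points of `D` nor in `u y` for an earlier `y ∈ D`. A point outside `D` is caught by an earlier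
point, so `closure D ∪ ⋃ u '' D` is everything. For `x ∈ D` the open set
`u x \ closure {y ∈ D | y ≺ x}` meets `D` only in `x`: earlier points lie in the closure and
later ones avoid `u x`. The latter also makes `u` injective on `D`, whence `|u '' D| = |D|`.
-/

namespace Shapirovskii

variable {X : Type*} [TopologicalSpace X] (r : X → X → Prop) (u : X → Set X)

def IsGreedySelection (D : Set X) : Prop :=
  ∀ x, x ∈ D ↔ x ∉ closure {y ∈ D | r y x} ∪ ⋃ y ∈ {y ∈ D | r y x}, u y

variable {r u}

theorem exists_isGreedySelection (hr : WellFounded r) : ∃ D, IsGreedySelection r u D := by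
  let step (x : X) (earlier : ∀ y, r y x → Prop) : Prop :=
    x ∉ closure {y | ∃ h : r y x, earlier y h} ∪ ⋃ y ∈ {y | ∃ h : r y x, earlier y h}, u y
  let greedy : X → Prop := hr.fix step
  refine ⟨{x | greedy x}, fun x => ?_⟩
  have hbefore : {y | ∃ _ : r y x, greedy y} = {y ∈ {x | greedy x} | r y x} :=
    ext fun _ => exists_prop.trans and_comm
  change greedy x ↔ _
  rw [show greedy x = step x fun y _ => greedy y from hr.fix_eq step x, ← hbefore]

variable {D : Set X}

namespace IsGreedySelection

theorem closure_union_biUnion_eq_univ (hD : IsGreedySelection r u D) :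
    closure D ∪ ⋃ y ∈ D, u y = Set.univ := by
  refine eq_univ_of_forall fun x => ?_
  by_cases hx : x ∈ D
  · exact Or.inl (subset_closure hx)
  · have hbefore : {y ∈ D | r y x} ⊆ D := sep_subset D _
    exact union_subset_union (closure_mono hbefore) (biUnion_subset_biUnion_left hbefore)
      (not_not.mp (mt (hD x).mpr hx))

theorem notMem_of_rel (hD : IsGreedySelection r u D) {x y : X} (hx : x ∈ D) (hy : y ∈ D)
    (hxy : r x y) : y ∉ u x := fun hyx =>
  (hD y).mp hy (Or.inr (mem_biUnion ⟨hx, hxy⟩ hyx))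

theorem notMem_closure (hD : IsGreedySelection r u D) {x : X} (hx : x ∈ D) :
    x ∉ closure {y ∈ D | r y x} := fun hcl =>
  (hD x).mp hx (Or.inl hcl)

variable [Std.Trichotomous r]

theorem injOn (hD : IsGreedySelection r u D) (hmem : ∀ x, x ∈ u x) : InjOn u D := by
  intro x hx y hy hxy
  rcases trichotomous_of r x y with h | h | h
  · exact absurd (hxy ▸ hmem y) (hD.notMem_of_rel hx hy h)
  · exact h
  · exact absurd (hxy ▸ hmem x) (hD.notMem_of_rel hy hx h)

theorem discreteTopology (hD : IsGreedySelection r u D) (hmem : ∀ x, x ∈ u x)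
    (hopen : ∀ x, IsOpen (u x)) : DiscreteTopology D := by
  refine discreteTopology_subtype_iff'.mpr fun x hx =>
    ⟨u x \ closure {y ∈ D | r y x}, (hopen x).sdiff isClosed_closure, ?_⟩
  refine Subset.antisymm ?_ ?_
  · rintro y ⟨⟨hyx, hycl⟩, hy⟩
    rcases trichotomous_of r y x with h | h | h
    · exact (hycl (subset_closure ⟨hy, h⟩)).elim
    · exact h
    · exact (hD.notMem_of_rel hx hy h hyx).elim
  · rintro y rfl
    exact ⟨⟨hmem y, hD.notMem_closure hx⟩, hx⟩

end IsGreedySelection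

end Shapirovskii

/-- Shapirovskii's Lemma: if `𝒰` is an open cover of `X`, then there are a discrete set
`D ⊆ X` and a subcollection `𝒱 ⊆ 𝒰` with `|𝒱| = |D|` and `X = cl(D) ∪ ⋃𝒱`. -/
theorem shapirovskii_lemma (X : Type u) [TopologicalSpace X] (𝒰 : Set (Set X))
    (hopen : ∀ U ∈ 𝒰, IsOpen U) (hcover : ⋃₀ 𝒰 = Set.univ) :
    ∃ (D : Set X) (𝒱 : Set (Set X)), 𝒱 ⊆ 𝒰 ∧ DiscreteTopology D ∧ #𝒱 = #D ∧
      closure D ∪ ⋃₀ 𝒱 = Set.univ := by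
  choose u hu𝒰 hmem using fun x => mem_sUnion.mp (hcover ▸ mem_univ x)
  obtain ⟨D, hD⟩ :=
    Shapirovskii.exists_isGreedySelection (u := u) (IsWellFounded.wf (r := WellOrderingRel))
  refine ⟨D, u '' D, image_subset_iff.mpr fun x _ => hu𝒰 x,
    hD.discreteTopology hmem fun x => hopen _ (hu𝒰 x), mk_image_eq_of_injOn _ _ (hD.injOn hmem),
    ?_⟩
  rw [sUnion_image]
  exact hD.closure_union_biUnion_eq_univ
end

section
/- Let X be a Hausdorff topological space. Then the pseudocharacter of X is at most the depth of X, i.e. ψ(X) ≤ g(X). Concretely: for every point x ∈ X there is a family of at most g(X)-many open subsets of X whose intersection equals {x}. -/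
/-!
Suppose `x` is not an intersection of `g(X)` open sets. Separate `x` from each `y ≠ x` by an open
`U y ∋ x` with `y ∉ closure (U y)`, and choose by transfinite recursion points `p α ≠ x` lying in
`U y` for every `y ≠ x` in the closure of the earlier points. The earlier points form a discrete
set, so their closure has at most `g(X)` points and such a `p α` exists. Each `p β` is isolated
from the earlier points by the complement of their closure, and from the later ones by
`(closure (U (p β)))ᶜ`, so a recursion of length `g(X)⁺` yields a discrete set of size `g(X)⁺`.
-/

open Cardinal Set

universe u

/-- The depth `g(X)`: the supremum of the cardinalities of closures of discrete subsets. -/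
noncomputable def depth (X : Type u) [TopologicalSpace X] : Cardinal.{u} :=
  ⨆ D : {D : Set X // DiscreteTopology D}, #(closure (D : Set X))

variable {X : Type u} [TopologicalSpace X]

theorem mk_closure_le_depth {D : Set X} (hD : DiscreteTopology D) : #(closure D) ≤ depth X :=
  le_ciSup bddAbove_of_small (⟨D, hD⟩ : {D : Set X // DiscreteTopology D})

theorem exists_isOpen_mem_notMem_closure [T2Space X] {x y : X} (h : x ≠ y) :
    ∃ U, IsOpen U ∧ x ∈ U ∧ y ∉ closure U := by
  obtain ⟨U, V, hU, hV, hxU, hyV, hUV⟩ := t2_separation h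
  exact ⟨U, hU, hxU, disjoint_right.1 (hUV.closure_left hV) hyV⟩

namespace Depth

variable {x : X} {U : X → Set X}

def nextPoints (x : X) (U : X → Set X) (S : Set X) : Set X :=
  (⋂ y ∈ closure S \ {x}, U y) \ {x}

theorem notMem_closure_of_mem_nextPoints (hU : ∀ y ≠ x, y ∉ closure (U y)) {S : Set X} {z : X}
    (hz : z ∈ nextPoints x U S) : z ∉ closure S := fun hzS =>
  hU z hz.2 (subset_closure (mem_iInter₂.1 hz.1 z ⟨hzS, hz.2⟩))

variable {I : Type*} [LinearOrder I] {g : I → X}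

theorem mem_of_mem_nextPoints_of_lt {b c : I} (hc : g c ∈ nextPoints x U (g '' Iio c))
    (hb : g b ≠ x) (hbc : b < c) : g c ∈ U (g b) :=
  mem_iInter₂.1 hc.1 (g b) ⟨subset_closure (mem_image_of_mem g hbc), hb⟩

theorem discreteTopology_image_of_mem_nextPoints (hU : ∀ y ≠ x, y ∉ closure (U y)) {T : Set I}
    (hg : ∀ b ∈ T, g b ∈ nextPoints x U (g '' Iio b)) : DiscreteTopology (g '' T) := by
  refine discreteTopology_subtype_iff'.2 ?_
  rintro _ ⟨b, hb, rfl⟩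
  have hgb := hg b hb
  refine ⟨(closure (U (g b)))ᶜ ∩ (closure (g '' Iio b))ᶜ,
    isClosed_closure.isOpen_compl.inter isClosed_closure.isOpen_compl, ?_⟩
  ext z
  constructor
  · rintro ⟨⟨hzU, hzS⟩, c, hc, rfl⟩
    rcases lt_trichotomy c b with hcb | rfl | hbc
    · exact (hzS (subset_closure (mem_image_of_mem g hcb))).elim
    · rfl
    · exact (hzU (subset_closure (mem_of_mem_nextPoints_of_lt (hg c hc) hgb.2 hbc))).elim
  · rintro rfl
    exact ⟨⟨hU _ hgb.2, notMem_closure_of_mem_nextPoints hU hgb⟩, b, hb, rfl⟩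

theorem injective_of_mem_nextPoints (hU : ∀ y ≠ x, y ∉ closure (U y))
    (hg : ∀ b, g b ∈ nextPoints x U (g '' Iio b)) : Function.Injective g :=
  .of_lt_imp_ne fun b c hbc hgbc => by
    have hc := mem_of_mem_nextPoints_of_lt (hg c) (hg b).2 hbc
    rw [← hgbc] at hc
    exact hU (g b) (hg b).2 (subset_closure hc)

theorem mk_le_depth_of_mem_nextPoints {I : Type u} [LinearOrder I] {g : I → X}
    (hU : ∀ y ≠ x, y ∉ closure (U y)) (hg : ∀ b, g b ∈ nextPoints x U (g '' Iio b)) :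
    #I ≤ depth X := by
  have hdisc : DiscreteTopology (range g) := by
    rw [← image_univ]
    exact discreteTopology_image_of_mem_nextPoints hU fun b _ => hg b
  calc #I = #(range g) := (mk_range_eq g (injective_of_mem_nextPoints hU hg)).symm
    _ ≤ #(closure (range g)) := mk_le_mk_of_subset subset_closure
    _ ≤ depth X := mk_closure_le_depth hdisc

variable [WellFoundedLT I]

noncomputable def nextPointsSeq (x : X) (U : X → Set X) : I → X :=
  WellFoundedLT.fix fun a p =>
    @Classical.epsilon X ⟨x⟩ (· ∈ nextPoints x U (range fun b : Iio a => p b b.2))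

theorem nextPointsSeq_eq (a : I) :
    nextPointsSeq x U a =
      @Classical.epsilon X ⟨x⟩ (· ∈ nextPoints x U (nextPointsSeq x U '' Iio a)) := by
  rw [nextPointsSeq, WellFoundedLT.fix_eq, image_eq_range]

theorem nextPointsSeq_mem (hU : ∀ y ≠ x, y ∉ closure (U y))
    (hne : ∀ S : Set X, #(closure S) ≤ depth X → (nextPoints x U S).Nonempty) (a : I) :
    nextPointsSeq x U a ∈ nextPoints x U (nextPointsSeq x U '' Iio a) := by
  induction a using WellFoundedLT.induction with
  | ind a ih =>
    rw [nextPointsSeq_eq]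
    exact Classical.epsilon_spec
      (hne _ (mk_closure_le_depth (discreteTopology_image_of_mem_nextPoints hU ih)))

end Depth

open Depth in
theorem exists_mk_le_depth_biInter_subset_singleton {x : X} {U : X → Set X}
    (hU : ∀ y ≠ x, y ∉ closure (U y)) :
    ∃ S : Set X, #S ≤ depth X ∧ ⋂ y ∈ S \ {x}, U y ⊆ {x} := by
  by_contra! h
  have hne (S : Set X) (hS : #(closure S) ≤ depth X) : (nextPoints x U S).Nonempty :=
    sdiff_nonempty.2 (h _ hS)
  have hsucc := mk_le_depth_of_mem_nextPoints hU
    (nextPointsSeq_mem (I := (Order.succ (depth X)).ord.ToType) hU hne)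
  rw [mk_toType, card_ord] at hsucc
  exact (Order.lt_succ (depth X)).not_ge hsucc

/-- For a Hausdorff space `X`, `ψ(X) ≤ g(X)`: every point is the intersection of a family
of at most `g(X)`-many open sets. -/
theorem pseudocharacter_le_depth (X : Type u) [TopologicalSpace X] [T2Space X] (x : X) :
    ∃ 𝒰 : Set (Set X), (∀ U ∈ 𝒰, IsOpen U) ∧ #𝒰 ≤ depth X ∧ ⋂₀ 𝒰 = {x} := by
  choose! U hUo hxU hyU using fun y (hy : y ≠ x) => exists_isOpen_mem_notMem_closure hy.symm
  obtain ⟨S, hS, hSx⟩ := exists_mk_le_depth_biInter_subset_singleton hyU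
  refine ⟨U '' (S \ {x}), ?_, mk_image_le.trans ((mk_le_mk_of_subset sdiff_subset).trans hS), ?_⟩
  · rintro _ ⟨y, hy, rfl⟩
    exact hUo y hy.2
  · rw [sInter_image]
    exact hSx.antisymm (singleton_subset_iff.2 (mem_iInter₂.2 fun y hy => hxU y hy.2))
end
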